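/- With notation as above, for s ≥ 0 the induced boost action on B in direction 𝐥 maps every truncated pointed convex cone K with apex at the origin 0 ∈ B and convex boundary set L ⊂ S² containing 𝐥 into itself: the apex 0 is moved to tanh(s)·𝐥 ∈ K, and each boundary point of L is moved along a great circle towards 𝐥, so that the transformed cone is contained in K. -/

import Mathlib

/-!
A point of `K = segCone 0 L` is determined by its norm in `(0, 1)` and its direction in `L`, so
`K` is closed under positive rescalings that stay in the ball; being convex, it is then closed
under every combination `a • x + b • y` with `a ≥ 0`, `b > 0` that stays in the ball.
The boost sends `v` to `D⁻¹ • (A • l + v)` with `D = cosh s + sinh s ⟪v, l⟫ > 0` and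
`A = sinh s + (cosh s - 1) ⟪v, l⟫ ≥ 1 - exp (-s) ≥ 0`, and it preserves the ball because
`‖A • l + v‖² = D² - (1 - ‖v‖²)`. Since `l / 2 ∈ K`, the image of `v ∈ K` is such a combination
of `l / 2` and `v`.
-/

noncomputable section

open scoped RealInnerProductSpace

abbrev E3 := EuclideanSpace ℝ (Fin 3)

def segCone (a : E3) (L : Set E3) : Set E3 :=
  {x | ∃ l ∈ L, ∃ t ∈ Set.Ioo (0 : ℝ) 1, x = a + t • (l - a)}

def IsTruncCone (K : Set E3) : Prop :=
  IsOpen K ∧ Convex ℝ K ∧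
    ∃ a : E3, ‖a‖ < 1 ∧ ∃ L : Set E3, (∀ l ∈ L, ‖l‖ = 1) ∧ K = segCone a L

/-- The induced boost action on the open unit ball in the Beltrami–Klein model. -/
def boostMap (s : ℝ) (l : E3) (v : E3) : E3 :=
  (Real.cosh s + Real.sinh s * ⟪v, l⟫)⁻¹ •
    ((Real.sinh s + Real.cosh s * ⟪v, l⟫) • l + (v - ⟪v, l⟫ • l))

open Real

lemma abs_inner_le_one {F : Type*} [NormedAddCommGroup F] [InnerProductSpace ℝ F] {l v : F}
    (hl : ‖l‖ = 1) (hv : ‖v‖ ≤ 1) : |⟪v, l⟫| ≤ 1 := by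
  calc |⟪v, l⟫| ≤ ‖v‖ * ‖l‖ := abs_real_inner_le_norm v l
    _ ≤ 1 := by rw [hl, mul_one]; exact hv

section SegCone

variable {L : Set E3}

lemma mem_segCone_zero_iff (hL : ∀ m ∈ L, ‖m‖ = 1) {x : E3} :
    x ∈ segCone 0 L ↔ x ≠ 0 ∧ ‖x‖ < 1 ∧ ‖x‖⁻¹ • x ∈ L := by
  constructor
  · rintro ⟨m, hm, t, ⟨ht0, ht1⟩, rfl⟩
    have hnorm : ‖(0 : E3) + t • (m - 0)‖ = t := by
      simp [norm_smul, hL m hm, abs_of_pos ht0]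
    refine ⟨?_, hnorm.symm ▸ ht1, ?_⟩
    · rw [← norm_pos_iff, hnorm]; exact ht0
    · rw [hnorm]; simpa [smul_smul, ht0.ne'] using hm
  · rintro ⟨hx0, hx1, hxL⟩
    refine ⟨_, hxL, ‖x‖, ⟨norm_pos_iff.mpr hx0, hx1⟩, ?_⟩
    simp [smul_smul, hx0]

lemma smul_mem_segCone_zero (hL : ∀ m ∈ L, ‖m‖ = 1) {x : E3} (hx : x ∈ segCone 0 L)
    {c : ℝ} (hc : 0 < c) (hcx : ‖c • x‖ < 1) : c • x ∈ segCone 0 L := by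
  obtain ⟨hx0, -, hxL⟩ := (mem_segCone_zero_iff hL).mp hx
  refine (mem_segCone_zero_iff hL).mpr ⟨smul_ne_zero hc.ne' hx0, hcx, ?_⟩
  rw [norm_smul, norm_of_nonneg hc.le, smul_smul]
  convert hxL using 2
  field_simp

lemma smul_add_smul_mem_segCone_zero (hL : ∀ m ∈ L, ‖m‖ = 1)
    (hconv : Convex ℝ (segCone 0 L)) {x y : E3} (hx : x ∈ segCone 0 L)
    (hy : y ∈ segCone 0 L) {a b : ℝ} (ha : 0 ≤ a) (hb : 0 < b)
    (hxy : ‖a • x + b • y‖ < 1) : a • x + b • y ∈ segCone 0 L := by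
  have hab : 0 < a + b := by linarith
  have hcomb : (a / (a + b)) • x + (b / (a + b)) • y ∈ segCone 0 L :=
    hconv hx hy (by positivity) (by positivity) (by field_simp)
  have hscale : a • x + b • y = (a + b) • ((a / (a + b)) • x + (b / (a + b)) • y) := by
    rw [smul_add, smul_smul, smul_smul, mul_div_cancel₀ _ hab.ne',
      mul_div_cancel₀ _ hab.ne']
  rw [hscale] at hxy ⊢
  exact smul_mem_segCone_zero hL hcomb hab hxy

end SegCone

section Boost

variable {s : ℝ} {l v : E3}

lemma boostMap_eq (s : ℝ) (l v : E3) :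
    boostMap s l v = (cosh s + sinh s * ⟪v, l⟫)⁻¹ •
      ((sinh s + (cosh s - 1) * ⟪v, l⟫) • l + v) := by
  rw [boostMap]
  congr 1
  module

lemma boostMap_zero (s : ℝ) (l : E3) : boostMap s l 0 = tanh s • l := by
  simp [boostMap, tanh_eq_sinh_div_cosh, smul_smul, div_eq_inv_mul]

lemma cosh_add_sinh_mul_pos (s : ℝ) {u : ℝ} (hu : |u| ≤ 1) : 0 < cosh s + sinh s * u := by
  have hsinh : |sinh s| < cosh s := by
    rw [abs_sinh, ← cosh_abs]; exact sinh_lt_cosh _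
  have hbound : -(sinh s * u) ≤ |sinh s| := by
    calc -(sinh s * u) ≤ |sinh s * u| := neg_le_abs _
      _ = |sinh s| * |u| := abs_mul _ _
      _ ≤ |sinh s| := mul_le_of_le_one_right (abs_nonneg _) hu
  linarith

lemma sinh_add_cosh_sub_one_mul_nonneg (hs : 0 ≤ s) {u : ℝ} (hu : |u| ≤ 1) :
    0 ≤ sinh s + (cosh s - 1) * u := by
  have hC : 0 ≤ cosh s - 1 := by linarith [one_le_cosh s]
  have hCS : cosh s - sinh s ≤ 1 := by
    rw [cosh_sub_sinh]; exact exp_le_one_iff.mpr (by linarith)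
  nlinarith [mul_le_mul_of_nonneg_left (neg_le_of_abs_le hu) hC]

lemma norm_sq_boost_numerator (s : ℝ) (hl : ‖l‖ = 1) (v : E3) :
    ‖(sinh s + (cosh s - 1) * ⟪v, l⟫) • l + v‖ ^ 2 =
      (cosh s + sinh s * ⟪v, l⟫) ^ 2 - (1 - ‖v‖ ^ 2) := by
  rw [norm_add_sq_real, norm_smul, mul_pow, norm_eq_abs, sq_abs, hl, real_inner_smul_left,
    real_inner_comm v l]
  linear_combination (⟪v, l⟫ ^ 2 - 1) * cosh_sq s

lemma norm_boostMap_lt_one (s : ℝ) (hl : ‖l‖ = 1) (hv : ‖v‖ < 1) :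
    ‖boostMap s l v‖ < 1 := by
  have hD := cosh_add_sinh_mul_pos s (abs_inner_le_one hl hv.le)
  rw [boostMap_eq, norm_smul, norm_inv, norm_of_nonneg hD.le, inv_mul_lt_iff₀ hD, mul_one,
    ← sq_lt_sq₀ (norm_nonneg _) hD.le, norm_sq_boost_numerator s hl]
  nlinarith [norm_nonneg v]

lemma boostMap_mem_segCone_zero (hs : 0 ≤ s) (hl : ‖l‖ = 1) {L : Set E3}
    (hL : ∀ m ∈ L, ‖m‖ = 1) (hlL : l ∈ L) (hconv : Convex ℝ (segCone 0 L))
    (hv : v ∈ segCone 0 L) : boostMap s l v ∈ segCone 0 L := by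
  have hv1 : ‖v‖ < 1 := ((mem_segCone_zero_iff hL).mp hv).2.1
  have hu := abs_inner_le_one hl hv1.le
  set D := cosh s + sinh s * ⟪v, l⟫
  set A := sinh s + (cosh s - 1) * ⟪v, l⟫
  have hD : 0 < D := cosh_add_sinh_mul_pos s hu
  have hhalf : (1 / 2 : ℝ) • l ∈ segCone 0 L := ⟨l, hlL, 1 / 2, by norm_num, by simp⟩
  have hcomb : boostMap s l v = (2 * D⁻¹ * A) • ((1 / 2 : ℝ) • l) + D⁻¹ • v := by
    rw [boostMap_eq]
    module
  rw [hcomb]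
  refine smul_add_smul_mem_segCone_zero hL hconv hhalf hv
    (by have := sinh_add_cosh_sub_one_mul_nonneg hs hu; positivity) (inv_pos.mpr hD) ?_
  rw [← hcomb]
  exact norm_boostMap_lt_one s hl hv1

end Boost

/-- For `s ≥ 0` the induced boost in direction `l` maps a truncated cone `K` with apex
`0` and boundary set `L ∋ l` into itself; the apex is moved to `tanh(s)·l ∈ K`
(Fact A.11, core computation). -/
theorem stmt14 (s : ℝ) (hs : 0 ≤ s) (l : E3) (hl : ‖l‖ = 1)
    (L : Set E3) (hL : ∀ m ∈ L, ‖m‖ = 1) (hlL : l ∈ L)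
    (hK : IsTruncCone (segCone 0 L)) :
    (boostMap s l '' segCone 0 L ⊆ segCone 0 L) ∧
    boostMap s l 0 = Real.tanh s • l ∧
    (0 < s → Real.tanh s • l ∈ segCone 0 L) := by
  obtain ⟨-, hconv, -⟩ := hK
  refine ⟨?_, boostMap_zero s l, fun hs_pos => ?_⟩
  · rintro _ ⟨v, hv, rfl⟩
    exact boostMap_mem_segCone_zero hs hl hL hlL hconv hv
  · have htanh : 0 < tanh s := by
      rw [tanh_eq_sinh_div_cosh]; exact div_pos (sinh_pos_iff.mpr hs_pos) (cosh_pos s)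
    exact ⟨l, hlL, tanh s, ⟨htanh, tanh_lt_one s⟩, by simp⟩
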